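/- For 0 < M < 1/2 and n ∈ ℕ ∪ {0}, the pair Φ⁽¹⁾(ρ) = (cos ρ)^{−M} (1 − sin ρ)^{1/2} P_n^{(1/2 − M, −1/2 − M)}(sin ρ), Φ⁽²⁾(ρ) = −(cos ρ)^{−M} (1 + sin ρ)^{1/2} P_n^{(−1/2 − M, 1/2 − M)}(sin ρ) satisfies the spatial Dirac system dΦ⁽¹⁾/dρ + M sec ρ Φ⁽¹⁾ = ω Φ⁽²⁾ and −dΦ⁽²⁾/dρ + M sec ρ Φ⁽²⁾ = ω Φ⁽¹⁾ with ω = n − M + 1/2, on (−π/2, π/2). -/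

import Mathlib

open Real Set

/-- Pochhammer symbol (x)_k = x(x+1)⋯(x+k−1). -/
noncomputable def poch (x : ℝ) (k : ℕ) : ℝ := ∏ i ∈ Finset.range k, (x + i)

/-- Jacobi polynomial P_n^{(a,b)}(x). -/
noncomputable def jacobiP (n : ℕ) (a b : ℝ) (x : ℝ) : ℝ :=
  (Real.Gamma (n + a + 1) / (n.factorial * Real.Gamma (a + 1))) *
    ∑ k ∈ Finset.range (n + 1),
      (poch (n + a + b + 1) k * poch (-(n : ℝ)) k / (poch (a + 1) k * k.factorial)) *
        ((1 - x) / 2) ^ k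

/-- First component of the Dirichlet type II mode. -/
noncomputable def PhiII1 (M : ℝ) (n : ℕ) (ρ : ℝ) : ℝ :=
  Real.cos ρ ^ (-M) * Real.sqrt (1 - Real.sin ρ) * jacobiP n (1/2 - M) (-(1/2) - M) (Real.sin ρ)

/-- Second component of the Dirichlet type II mode. -/
noncomputable def PhiII2 (M : ℝ) (n : ℕ) (ρ : ℝ) : ℝ :=
  -(Real.cos ρ ^ (-M) * Real.sqrt (1 + Real.sin ρ) * jacobiP n (-(1/2) - M) (1/2 - M) (Real.sin ρ))

/-! Both equations reduce to contiguous relations of Jacobi polynomials. For a profile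
`f ρ = (cos ρ)^(-M) √(1 - σ sin ρ) g (sin ρ)` with `σ = ±1`, the identity
`√(1 - σ sin ρ) √(1 + σ sin ρ) = cos ρ` turns `f' + σ M sec ρ f` into
`(cos ρ)^(-M) √(1 + σ sin ρ) ((1 - σ x) g' - σ (1/2 - M) g)` at `x = sin ρ`. The relations
`(1 - x) P' - a P = -(n + a) P^(a-1, b+1)` and `(1 + x) P' + b P = (n + b) P^(a+1, b-1)`,
checked coefficientwise on the hypergeometric series in `(1 - x) / 2`, then give the system. -/

lemma poch_succ (x : ℝ) (k : ℕ) : poch x (k + 1) = poch x k * (x + k) :=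
  Finset.prod_range_succ _ _

lemma poch_mul_add (x : ℝ) (k : ℕ) : poch x k * (x + k) = x * poch (x + 1) k := by
  rw [← poch_succ, poch, Finset.prod_range_succ', poch]
  push_cast
  simp only [add_zero, add_assoc, add_comm (1 : ℝ)]
  ring

lemma poch_pos {x : ℝ} (hx : 0 < x) (k : ℕ) : 0 < poch x k :=
  Finset.prod_pos fun _ _ => by positivity

lemma poch_neg_natCast_succ (n : ℕ) : poch (-(n : ℝ)) (n + 1) = 0 :=
  Finset.prod_eq_zero (Finset.self_mem_range_succ n) (by simp)

noncomputable def jacobiNorm (n : ℕ) (a : ℝ) : ℝ :=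
  Real.Gamma (n + a + 1) / (n.factorial * Real.Gamma (a + 1))

noncomputable def jacobiCoeff (n : ℕ) (a b : ℝ) (k : ℕ) : ℝ :=
  poch (n + a + b + 1) k * poch (-(n : ℝ)) k / (poch (a + 1) k * k.factorial)

lemma jacobiP_eq (n : ℕ) (a b x : ℝ) :
    jacobiP n a b x =
      jacobiNorm n a * ∑ k ∈ Finset.range (n + 1), jacobiCoeff n a b k * ((1 - x) / 2) ^ k :=
  rfl

lemma jacobiCoeff_succ_self (n : ℕ) (a b : ℝ) : jacobiCoeff n a b (n + 1) = 0 := by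
  simp [jacobiCoeff, poch_neg_natCast_succ]

lemma hasDerivAt_jacobiP (n : ℕ) (a b x : ℝ) :
    HasDerivAt (jacobiP n a b)
      (-(1 / 2) * jacobiNorm n a * ∑ k ∈ Finset.range (n + 1),
        jacobiCoeff n a b k * (k * ((1 - x) / 2) ^ (k - 1))) x := by
  have ht : HasDerivAt (fun y : ℝ => (1 - y) / 2) (-(1 / 2)) x :=
    (((hasDerivAt_id' x).const_sub 1).div_const 2).congr_deriv (by norm_num)
  have hsum := (HasDerivAt.fun_sum (u := Finset.range (n + 1)) fun k _ =>
    (ht.fun_pow k).const_mul (jacobiCoeff n a b k)).const_mul (jacobiNorm n a)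
  refine hsum.congr_deriv ?_
  simp only [Finset.mul_sum]
  exact Finset.sum_congr rfl fun k _ => by ring

lemma deriv_jacobiP (n : ℕ) (a b x : ℝ) :
    deriv (jacobiP n a b) x = -(1 / 2) * jacobiNorm n a * ∑ k ∈ Finset.range (n + 1),
        jacobiCoeff n a b k * (k * ((1 - x) / 2) ^ (k - 1)) :=
  (hasDerivAt_jacobiP n a b x).deriv

lemma natCast_mul_pow_pred_mul (k : ℕ) (t : ℝ) : (k : ℝ) * t ^ (k - 1) * t = k * t ^ k := by
  rcases k with _ | k <;> simp [pow_succ, mul_assoc]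

lemma jacobiNorm_mul_jacobiCoeff_lower {a : ℝ} (ha : 0 < a) (n : ℕ) (b : ℝ) (k : ℕ) :
    (k + a) * jacobiNorm n a * jacobiCoeff n a b k
      = (n + a) * jacobiNorm n (a - 1) * jacobiCoeff n (a - 1) (b + 1) k := by
  have hna : (0 : ℝ) < n + a := by positivity
  have hΓ : Real.Gamma (n + a + 1) = (n + a) * Real.Gamma (n + a) := Real.Gamma_add_one hna.ne'
  have hΓa : Real.Gamma (a + 1) = a * Real.Gamma a := Real.Gamma_add_one ha.ne'
  have hshift := poch_mul_add a k
  have hΓa0 := (Real.Gamma_pos_of_pos ha).ne'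
  have hpoch := (poch_pos ha k).ne'
  have hpoch1 := (poch_pos (by linarith : 0 < a + 1) k).ne'
  simp only [jacobiNorm, jacobiCoeff, sub_add_cancel, hΓ, hΓa,
    show (n : ℝ) + (a - 1) + 1 = n + a by ring,
    show (n : ℝ) + (a - 1) + (b + 1) + 1 = n + a + b + 1 by ring]
  field_simp
  linear_combination (poch (n + a + b + 1) k * poch (-(n : ℝ)) k) * hshift

lemma jacobiNorm_mul_jacobiCoeff_raise {a : ℝ} (ha : 0 < a + 1) (n : ℕ) (b : ℝ) (k : ℕ) :
    jacobiNorm n a * ((k + b) * jacobiCoeff n a b k - (k + 1) * jacobiCoeff n a b (k + 1))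
      = (n + b) * jacobiNorm n (a + 1) * jacobiCoeff n (a + 1) (b - 1) k := by
  have hna : (0 : ℝ) < n + a + 1 := by have := n.cast_nonneg (α := ℝ); linarith
  have hΓ : Real.Gamma (n + (a + 1) + 1) = (n + a + 1) * Real.Gamma (n + a + 1) := by
    rw [← Real.Gamma_add_one hna.ne']; ring_nf
  have hΓa : Real.Gamma (a + 1 + 1) = (a + 1) * Real.Gamma (a + 1) := Real.Gamma_add_one ha.ne'
  have hshift := poch_mul_add (a + 1) k
  have hΓa0 := (Real.Gamma_pos_of_pos ha).ne'
  have hpoch := (poch_pos ha k).ne'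
  have hpoch1 := (poch_pos (by linarith : 0 < a + 1 + 1) k).ne'
  have hak : a + 1 + k ≠ 0 := by have := k.cast_nonneg (α := ℝ); linarith
  simp only [jacobiNorm, jacobiCoeff, poch_succ, Nat.factorial_succ, hΓ, hΓa,
    show (n : ℝ) + (a + 1) + (b - 1) + 1 = n + a + b + 1 by ring]
  push_cast
  field_simp
  -- `(k + b) (a + 1 + k) - (n + a + b + 1 + k) (k - n) = (n + b) (n + a + 1)`
  linear_combination (-(n + a + 1) * (n + b) * poch (n + a + b + 1) k * poch (-(n : ℝ)) k) * hshift

lemma one_sub_mul_deriv_jacobiP_sub {a : ℝ} (ha : 0 < a) (n : ℕ) (b x : ℝ) :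
    (1 - x) * deriv (jacobiP n a b) x - a * jacobiP n a b x
      = -(n + a) * jacobiP n (a - 1) (b + 1) x := by
  rw [deriv_jacobiP, jacobiP_eq, jacobiP_eq]
  simp only [Finset.mul_sum, ← Finset.sum_sub_distrib]
  refine Finset.sum_congr rfl fun k _ => ?_
  linear_combination
    (-jacobiNorm n a * jacobiCoeff n a b k) * natCast_mul_pow_pred_mul k ((1 - x) / 2)
      - ((1 - x) / 2) ^ k * jacobiNorm_mul_jacobiCoeff_lower ha n b k

lemma sum_jacobiCoeff_mul_pow_pred (n : ℕ) (a b t : ℝ) :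
    ∑ k ∈ Finset.range (n + 1), jacobiCoeff n a b k * (k * t ^ (k - 1))
      = ∑ k ∈ Finset.range (n + 1), (k + 1) * jacobiCoeff n a b (k + 1) * t ^ k := by
  rw [Finset.sum_range_succ', Finset.sum_range_succ _ n, jacobiCoeff_succ_self]
  simp [mul_comm, mul_left_comm]

lemma one_add_mul_deriv_jacobiP_add {a : ℝ} (ha : 0 < a + 1) (n : ℕ) (b x : ℝ) :
    (1 + x) * deriv (jacobiP n a b) x + b * jacobiP n a b x
      = (n + b) * jacobiP n (a + 1) (b - 1) x := by
  rw [deriv_jacobiP, jacobiP_eq, jacobiP_eq, show 1 + x = 2 - 2 * ((1 - x) / 2) by ring]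
  generalize (1 - x) / 2 = t
  have htS : t * ∑ k ∈ Finset.range (n + 1), jacobiCoeff n a b k * (k * t ^ (k - 1))
      = ∑ k ∈ Finset.range (n + 1), k * jacobiCoeff n a b k * t ^ k := by
    rw [Finset.mul_sum]
    refine Finset.sum_congr rfl fun k _ => ?_
    linear_combination jacobiCoeff n a b k * natCast_mul_pow_pred_mul k t
  have hraise : (n + b) * (jacobiNorm n (a + 1) * ∑ k ∈ Finset.range (n + 1),
      jacobiCoeff n (a + 1) (b - 1) k * t ^ k) = jacobiNorm n a * ∑ k ∈ Finset.range (n + 1),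
        ((k + b) * jacobiCoeff n a b k - (k + 1) * jacobiCoeff n a b (k + 1)) * t ^ k := by
    simp only [Finset.mul_sum]
    refine Finset.sum_congr rfl fun k _ => ?_
    linear_combination -(t ^ k) * jacobiNorm_mul_jacobiCoeff_raise ha n b k
  have hsplit : ∑ k ∈ Finset.range (n + 1),
      ((k + b) * jacobiCoeff n a b k - (k + 1) * jacobiCoeff n a b (k + 1)) * t ^ k
        = ∑ k ∈ Finset.range (n + 1), k * jacobiCoeff n a b k * t ^ k
          + b * ∑ k ∈ Finset.range (n + 1), jacobiCoeff n a b k * t ^ k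
          - ∑ k ∈ Finset.range (n + 1), (k + 1) * jacobiCoeff n a b (k + 1) * t ^ k := by
    rw [Finset.mul_sum, ← Finset.sum_add_distrib, ← Finset.sum_sub_distrib]
    exact Finset.sum_congr rfl fun k _ => by ring
  rw [hraise, hsplit, ← sum_jacobiCoeff_mul_pow_pred, ← htS]
  ring

noncomputable def diracProfile (M σ : ℝ) (g : ℝ → ℝ) (ρ : ℝ) : ℝ :=
  cos ρ ^ (-M) * √(1 - σ * sin ρ) * g (sin ρ)

lemma abs_mul_sin_lt_one {σ ρ : ℝ} (hσ : σ ^ 2 = 1) (hρ : ρ ∈ Ioo (-(π / 2)) (π / 2)) :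
    |σ * sin ρ| < 1 := by
  have hc := cos_pos_of_mem_Ioo hρ
  rw [← sq_lt_one_iff_abs_lt_one, mul_pow, hσ, one_mul]
  nlinarith [sin_sq_add_cos_sq ρ]

lemma sqrt_one_sub_mul_sqrt_one_add {σ ρ : ℝ} (hσ : σ ^ 2 = 1) (hρ : ρ ∈ Ioo (-(π / 2)) (π / 2)) :
    √(1 - σ * sin ρ) * √(1 + σ * sin ρ) = cos ρ := by
  have h := abs_lt.mp (abs_mul_sin_lt_one hσ hρ)
  rw [← Real.sqrt_mul (by linarith), cos_eq_sqrt_one_sub_sin_sq hρ.1.le hρ.2.le]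
  congr 1
  linear_combination -sin ρ ^ 2 * hσ

lemma hasDerivAt_diracProfile (M : ℝ) {σ : ℝ} (hσ : σ ^ 2 = 1) {g : ℝ → ℝ} {ρ : ℝ}
    (hρ : ρ ∈ Ioo (-(π / 2)) (π / 2)) (hg : DifferentiableAt ℝ g (sin ρ)) :
    HasDerivAt (diracProfile M σ g)
      (M * sin ρ * (cos ρ ^ (-M) / cos ρ) * √(1 - σ * sin ρ) * g (sin ρ)
        + cos ρ ^ (-M) * (-(σ * cos ρ) / (2 * √(1 - σ * sin ρ))) * g (sin ρ)
        + cos ρ ^ (-M) * √(1 - σ * sin ρ) * (deriv g (sin ρ) * cos ρ)) ρ := by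
  have hc := (cos_pos_of_mem_Ioo hρ).ne'
  have hs := abs_lt.mp (abs_mul_sin_lt_one hσ hρ)
  have hcos : HasDerivAt (fun t => cos t ^ (-M)) (M * sin ρ * (cos ρ ^ (-M) / cos ρ)) ρ := by
    refine ((hasDerivAt_cos ρ).rpow_const (Or.inl hc)).congr_deriv ?_
    rw [Real.rpow_sub_one hc]
    ring
  have hsqrt : HasDerivAt (fun t => √(1 - σ * sin t)) (-(σ * cos ρ) / (2 * √(1 - σ * sin ρ))) ρ :=
    (((hasDerivAt_sin ρ).const_mul σ).const_sub 1).sqrt (by linarith)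
  exact ((hcos.mul hsqrt).mul (hg.hasDerivAt.comp ρ (hasDerivAt_sin ρ))).congr_deriv
    (by simp only [Pi.mul_apply, Function.comp_apply]; ring)

theorem deriv_diracProfile_add (M : ℝ) {σ : ℝ} (hσ : σ ^ 2 = 1) {g : ℝ → ℝ} {ρ : ℝ}
    (hρ : ρ ∈ Ioo (-(π / 2)) (π / 2)) (hg : DifferentiableAt ℝ g (sin ρ)) :
    deriv (diracProfile M σ g) ρ + σ * M * (cos ρ)⁻¹ * diracProfile M σ g ρ
      = cos ρ ^ (-M) * √(1 + σ * sin ρ)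
        * ((1 - σ * sin ρ) * deriv g (sin ρ) - σ * (1 / 2 - M) * g (sin ρ)) := by
  have hc := (cos_pos_of_mem_Ioo hρ).ne'
  have hs := abs_lt.mp (abs_mul_sin_lt_one hσ hρ)
  have hr : √(1 - σ * sin ρ) ≠ 0 := (Real.sqrt_pos.mpr (by linarith)).ne'
  have hr2 : √(1 - σ * sin ρ) ^ 2 = 1 - σ * sin ρ := Real.sq_sqrt (by linarith)
  have hrq := sqrt_one_sub_mul_sqrt_one_add hσ hρ
  rw [(hasDerivAt_diracProfile M hσ hρ hg).deriv, diracProfile]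
  have hpyth := sin_sq_add_cos_sq ρ
  generalize √(1 - σ * sin ρ) = r at hr hr2 hrq ⊢
  generalize √(1 + σ * sin ρ) = q at hrq ⊢
  generalize cos ρ ^ (-M) = A
  field_simp
  linear_combination
    -(A * cos ρ * (2 * deriv g (sin ρ) * (1 - sin ρ * σ) - g (sin ρ) * σ * (1 - M * 2))) * hrq
      + 2 * A * cos ρ ^ 2 * deriv g (sin ρ) * hr2
      + 2 * M * A * g (sin ρ) * ((sin ρ + σ) * hr2 - sin ρ * hσ - σ * hpyth)

lemma PhiII1_eq_diracProfile (M : ℝ) (n : ℕ) :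
    PhiII1 M n = diracProfile M 1 (jacobiP n (1 / 2 - M) (-(1 / 2) - M)) := by
  ext ρ
  simp [PhiII1, diracProfile]

lemma PhiII2_eq_neg_diracProfile (M : ℝ) (n : ℕ) :
    PhiII2 M n = -diracProfile M (-1) (jacobiP n (-(1 / 2) - M) (1 / 2 - M)) := by
  ext ρ
  simp [PhiII2, diracProfile, sub_eq_add_neg]

theorem stmt15_general (M : ℝ) (hM' : M < 1/2) (n : ℕ) :
    (∀ ρ ∈ Ioo (-(π/2)) (π/2),
      deriv (PhiII1 M n) ρ + M * (Real.cos ρ)⁻¹ * PhiII1 M n ρ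
        = ((n : ℝ) - M + 1/2) * PhiII2 M n ρ) ∧
    (∀ ρ ∈ Ioo (-(π/2)) (π/2),
      -deriv (PhiII2 M n) ρ + M * (Real.cos ρ)⁻¹ * PhiII2 M n ρ
        = ((n : ℝ) - M + 1/2) * PhiII1 M n ρ) := by
  have ha : (0 : ℝ) < 1 / 2 - M := by linarith
  constructor
  · intro ρ hρ
    have hdirac := deriv_diracProfile_add M (one_pow 2) hρ
      (hasDerivAt_jacobiP n (1 / 2 - M) (-(1 / 2) - M) (sin ρ)).differentiableAt
    have hjacobi := one_sub_mul_deriv_jacobiP_sub ha n (-(1 / 2) - M) (sin ρ)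
    rw [show 1 / 2 - M - 1 = -(1 / 2) - M by ring, show -(1 / 2) - M + 1 = 1 / 2 - M by ring]
      at hjacobi
    rw [PhiII2_eq_neg_diracProfile, PhiII1_eq_diracProfile]
    simp only [Pi.neg_apply, diracProfile, one_mul, neg_one_mul, sub_neg_eq_add] at hdirac ⊢
    linear_combination hdirac + cos ρ ^ (-M) * √(1 + sin ρ) * hjacobi
  · intro ρ hρ
    have hdirac := deriv_diracProfile_add M (by norm_num : (-1 : ℝ) ^ 2 = 1) hρ
      (hasDerivAt_jacobiP n (-(1 / 2) - M) (1 / 2 - M) (sin ρ)).differentiableAt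
    have hjacobi := one_add_mul_deriv_jacobiP_add (by linarith : 0 < -(1 / 2) - M + 1) n
      (1 / 2 - M) (sin ρ)
    rw [show -(1 / 2) - M + 1 = 1 / 2 - M by ring, show 1 / 2 - M - 1 = -(1 / 2) - M by ring]
      at hjacobi
    rw [PhiII2_eq_neg_diracProfile, PhiII1_eq_diracProfile, deriv.neg]
    simp only [Pi.neg_apply, diracProfile, one_mul, neg_one_mul, sub_neg_eq_add,
      ← sub_eq_add_neg] at hdirac ⊢
    linear_combination hdirac + cos ρ ^ (-M) * √(1 - sin ρ) * hjacobi

/-- For 0 < M < 1/2, the Dirichlet type II mode pair satisfies the spatial Dirac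
system with ω = n − M + 1/2 on (−π/2, π/2). -/
theorem stmt15 (M : ℝ) (hM : 0 < M) (hM' : M < 1/2) (n : ℕ) :
    (∀ ρ ∈ Ioo (-(π/2)) (π/2),
      deriv (PhiII1 M n) ρ + M * (Real.cos ρ)⁻¹ * PhiII1 M n ρ
        = ((n : ℝ) - M + 1/2) * PhiII2 M n ρ) ∧
    (∀ ρ ∈ Ioo (-(π/2)) (π/2),
      -deriv (PhiII2 M n) ρ + M * (Real.cos ρ)⁻¹ * PhiII2 M n ρ
        = ((n : ℝ) - M + 1/2) * PhiII1 M n ρ) :=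
  stmt15_general M hM' n
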